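/- Let φ : 𝕋 → ℂ be a measurable function with |φ(ζ)| ≤ 1 for m-a.e. ζ ∈ 𝕋, and suppose Σ_{n=0}^{∞} ∫_𝕋 |φ(ζ)|^{2n} dm(ζ) < ∞. Then lim_{|a|→1⁻, a ∈ 𝔻} ∫_𝕋 (1 - |a|²)/|1 - conj(a)·φ(ζ)|² dm(ζ) = 0. -/

import Mathlib

/-!
Write `t = |φ|` on `𝕋`. Since `Σ t^{2n} = (1 - t²)⁻¹` (with value `∞` where `t = 1`), monotone
convergence turns the hypothesis into integrability of `(1 - t²)⁻¹`; in particular `t < 1` a.e.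
From `|1 - ā φ| ≥ 1 - |a| t` the integrand is at most `(1 - |a|²) / (1 - t)²`, which tends to `0`
wherever `t < 1`, and at most `4 (1 - t²)⁻¹`, because `(1 - |a|)(1 - t) ≤ (1 - |a| t)²`.
Dominated convergence concludes.
-/

open MeasureTheory Filter Metric Complex

/-- The filter of points `a` of the open unit disk `𝔻` with `|a| → 1⁻`. -/
noncomputable def toBoundary : Filter ℂ :=
  Filter.comap (fun a : ℂ => ‖a‖) (nhdsWithin 1 (Set.Iio 1))

/-- The average of `f` over the unit circle `𝕋` with respect to normalized
arclength measure `m`: `∫_𝕋 f dm = (2π)⁻¹ ∫_0^{2π} f(e^{iθ}) dθ`. -/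
noncomputable def circleAvg (f : ℂ → ℝ) : ℝ :=
  (2 * Real.pi)⁻¹ * ∫ θ in (0:ℝ)..(2 * Real.pi), f (Complex.exp (θ * Complex.I))

open scoped ENNReal Topology

section GeometricSeries

variable {α E : Type*} [MeasurableSpace α] {μ : Measure α} [NormedAddCommGroup E]

theorem lintegral_inv_one_sub_eq_tsum_lintegral_pow {g : α → ℝ≥0∞} (hg : AEMeasurable g μ) :
    ∫⁻ x, (1 - g x)⁻¹ ∂μ = ∑' n : ℕ, ∫⁻ x, g x ^ n ∂μ := by
  simp_rw [← ENNReal.tsum_geometric]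
  exact lintegral_tsum fun n => hg.pow_const n

theorem lintegral_inv_one_sub_enorm_sq_lt_top_of_summable [IsFiniteMeasure μ] {f : α → E}
    (hf : AEStronglyMeasurable f μ) (hle : ∀ᵐ x ∂μ, ‖f x‖ ≤ 1)
    (hsum : Summable fun n : ℕ => ∫ x, ‖f x‖ ^ (2 * n) ∂μ) :
    ∫⁻ x, (1 - ‖f x‖ₑ ^ 2)⁻¹ ∂μ < ∞ := by
  have hint (n : ℕ) : Integrable (fun x => ‖f x‖ ^ (2 * n)) μ := by
    refine .of_bound (by fun_prop) 1 ?_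
    filter_upwards [hle] with x hx
    simpa using pow_le_one₀ (norm_nonneg _) hx
  have hterm (n : ℕ) :
      ∫⁻ x, (‖f x‖ₑ ^ 2) ^ n ∂μ = ENNReal.ofReal (∫ x, ‖f x‖ ^ (2 * n) ∂μ) := by
    rw [ofReal_integral_eq_lintegral_ofReal (hint n) (ae_of_all _ fun x => by positivity)]
    simp_rw [← pow_mul, ENNReal.ofReal_pow (norm_nonneg _), ofReal_norm]
  rw [lintegral_inv_one_sub_eq_tsum_lintegral_pow (hf.enorm.pow_const 2), tsum_congr hterm,
    ← ENNReal.ofReal_tsum_of_nonneg (fun n => integral_nonneg fun x => by positivity) hsum]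
  exact ENNReal.ofReal_lt_top

theorem inv_one_sub_enorm_sq_eq_top {w : E} (hw : 1 ≤ ‖w‖) : (1 - ‖w‖ₑ ^ 2)⁻¹ = ∞ := by
  have : 1 ≤ ‖w‖ₑ ^ 2 := one_le_pow₀ (by rw [← ofReal_norm]; exact ENNReal.one_le_ofReal.2 hw)
  rw [tsub_eq_zero_of_le this, ENNReal.inv_zero]

theorem enorm_inv_one_sub_norm_sq_le (w : E) : ‖(1 - ‖w‖ ^ 2)⁻¹‖ₑ ≤ (1 - ‖w‖ₑ ^ 2)⁻¹ := by
  rcases lt_or_ge ‖w‖ 1 with hw | hw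
  · have hpos : 0 < 1 - ‖w‖ ^ 2 := by nlinarith [norm_nonneg w]
    rw [Real.enorm_of_nonneg (inv_nonneg.2 hpos.le), ENNReal.ofReal_inv_of_pos hpos,
      ENNReal.ofReal_sub _ (sq_nonneg _), ENNReal.ofReal_one, ENNReal.ofReal_pow (norm_nonneg _),
      ofReal_norm]
  · exact (inv_one_sub_enorm_sq_eq_top hw).symm ▸ le_top

theorem integrable_inv_one_sub_norm_sq {f : α → E} (hf : AEStronglyMeasurable f μ)
    (hfin : ∫⁻ x, (1 - ‖f x‖ₑ ^ 2)⁻¹ ∂μ < ∞) :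
    Integrable (fun x => (1 - ‖f x‖ ^ 2)⁻¹) μ :=
  ⟨by fun_prop, (lintegral_mono fun x => enorm_inv_one_sub_norm_sq_le (f x)).trans_lt hfin⟩

theorem ae_norm_lt_one_of_lintegral_inv_one_sub_enorm_sq_lt_top {f : α → E}
    (hf : AEStronglyMeasurable f μ) (hfin : ∫⁻ x, (1 - ‖f x‖ₑ ^ 2)⁻¹ ∂μ < ∞) :
    ∀ᵐ x ∂μ, ‖f x‖ < 1 := by
  filter_upwards [ae_lt_top' (by fun_prop) hfin.ne] with x hx
  by_contra! h
  exact hx.ne (inv_one_sub_enorm_sq_eq_top h)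

end GeometricSeries

theorem one_sub_norm_mul_norm_le_norm_one_sub_conj_mul (a w : ℂ) :
    1 - ‖a‖ * ‖w‖ ≤ ‖1 - (starRingEnd ℂ) a * w‖ := by
  simpa using norm_sub_norm_le (1 : ℂ) ((starRingEnd ℂ) a * w)

noncomputable def diskKernel (a w : ℂ) : ℝ :=
  (1 - ‖a‖ ^ 2) / ‖1 - (starRingEnd ℂ) a * w‖ ^ 2

namespace diskKernel

theorem nonneg {a : ℂ} (ha : ‖a‖ ≤ 1) (w : ℂ) : 0 ≤ diskKernel a w :=
  div_nonneg (sub_nonneg.2 (pow_le_one₀ (norm_nonneg a) ha)) (sq_nonneg _)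

theorem le_div_one_sub_norm_sq {a w : ℂ} (ha : ‖a‖ ≤ 1) (hw : ‖w‖ < 1) :
    diskKernel a w ≤ (1 - ‖a‖ ^ 2) / (1 - ‖w‖) ^ 2 := by
  have hD : 1 - ‖w‖ ≤ ‖1 - (starRingEnd ℂ) a * w‖ := by
    nlinarith [one_sub_norm_mul_norm_le_norm_one_sub_conj_mul a w, norm_nonneg w]
  exact div_le_div_of_nonneg_left (sub_nonneg.2 (pow_le_one₀ (norm_nonneg a) ha))
    (by nlinarith) (pow_le_pow_left₀ (by linarith) hD 2)

theorem le_four_mul_inv {a w : ℂ} (ha : ‖a‖ < 1) (hw : ‖w‖ < 1) :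
    diskKernel a w ≤ 4 * (1 - ‖w‖ ^ 2)⁻¹ := by
  set r := ‖a‖
  set t := ‖w‖
  have hr : 0 ≤ r := norm_nonneg a
  have ht : 0 ≤ t := norm_nonneg w
  have hrt : 0 < 1 - r * t := by nlinarith
  have hD : (1 - r * t) ^ 2 ≤ ‖1 - (starRingEnd ℂ) a * w‖ ^ 2 :=
    pow_le_pow_left₀ hrt.le (one_sub_norm_mul_norm_le_norm_one_sub_conj_mul a w) 2
  have hsmall : (1 - r) * (1 - t) ≤ (1 - r * t) ^ 2 := by
    rw [sq]; exact mul_le_mul (by nlinarith) (by nlinarith) (by linarith) hrt.le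
  have hbig : (1 + r) * (1 + t) ≤ 4 := by nlinarith
  rw [diskKernel, ← div_eq_mul_inv, div_le_div_iff₀ ((pow_pos hrt 2).trans_le hD) (by nlinarith)]
  calc (1 - r ^ 2) * (1 - t ^ 2) = ((1 - r) * (1 - t)) * ((1 + r) * (1 + t)) := by ring
    _ ≤ (1 - r * t) ^ 2 * 4 := mul_le_mul hsmall hbig (by nlinarith) (sq_nonneg _)
    _ ≤ 4 * ‖1 - (starRingEnd ℂ) a * w‖ ^ 2 := by linarith

theorem measurable (a : ℂ) : Measurable (diskKernel a) := by
  unfold diskKernel; fun_prop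

end diskKernel

instance : toBoundary.IsCountablyGenerated := by
  unfold toBoundary; infer_instance

theorem tendsto_norm_toBoundary : Tendsto (‖·‖) toBoundary (𝓝[<] 1) :=
  tendsto_comap

theorem eventually_norm_lt_one_toBoundary : ∀ᶠ a in toBoundary, ‖a‖ < 1 :=
  tendsto_norm_toBoundary.eventually eventually_mem_nhdsWithin

theorem tendsto_one_sub_norm_sq_toBoundary :
    Tendsto (fun a : ℂ => 1 - ‖a‖ ^ 2) toBoundary (𝓝 0) := by
  simpa using tendsto_const_nhds.sub
    ((tendsto_norm_toBoundary.mono_right nhdsWithin_le_nhds).pow 2) (a := (1 : ℝ))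

theorem tendsto_diskKernel_toBoundary {w : ℂ} (hw : ‖w‖ < 1) :
    Tendsto (diskKernel · w) toBoundary (𝓝 0) := by
  have hbound := tendsto_one_sub_norm_sq_toBoundary.div_const ((1 - ‖w‖) ^ 2)
  rw [zero_div] at hbound
  refine squeeze_zero' ?_ ?_ hbound
  · filter_upwards [eventually_norm_lt_one_toBoundary] with a ha
    exact diskKernel.nonneg ha.le w
  · filter_upwards [eventually_norm_lt_one_toBoundary] with a ha
    exact diskKernel.le_div_one_sub_norm_sq ha.le hw

theorem tendsto_integral_diskKernel_toBoundary {α : Type*} [MeasurableSpace α] {μ : Measure α}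
    {f : α → ℂ} (hf : AEStronglyMeasurable f μ) (hfin : ∫⁻ x, (1 - ‖f x‖ₑ ^ 2)⁻¹ ∂μ < ∞) :
    Tendsto (fun a => ∫ x, diskKernel a (f x) ∂μ) toBoundary (𝓝 0) := by
  have hlt := ae_norm_lt_one_of_lintegral_inv_one_sub_enorm_sq_lt_top hf hfin
  rw [← integral_zero α ℝ (μ := μ)]
  refine tendsto_integral_filter_of_dominated_convergence (fun x => 4 * (1 - ‖f x‖ ^ 2)⁻¹)
    (.of_forall fun a => ?_) ?_ ((integrable_inv_one_sub_norm_sq hf hfin).const_mul 4) ?_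
  · exact ((diskKernel.measurable a).comp_aemeasurable hf.aemeasurable).aestronglyMeasurable
  · filter_upwards [eventually_norm_lt_one_toBoundary] with a ha
    filter_upwards [hlt] with x hx
    rw [Real.norm_of_nonneg (diskKernel.nonneg ha.le _)]
    exact diskKernel.le_four_mul_inv ha hx
  · filter_upwards [hlt] with x hx using tendsto_diskKernel_toBoundary hx

theorem circleAvg_eq_setIntegral (f : ℂ → ℝ) :
    circleAvg f =
      (2 * Real.pi)⁻¹ * ∫ θ in Set.Ioc 0 (2 * Real.pi), f (Complex.exp (θ * Complex.I)) := by
  rw [circleAvg, intervalIntegral.integral_of_le Real.two_pi_pos.le]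

/-- If `φ : 𝕋 → ℂ` is measurable with `|φ| ≤ 1` a.e. on `𝕋` and
`Σ_{n=0}^∞ ∫_𝕋 |φ|^{2n} dm < ∞`, then
`∫_𝕋 (1-|a|²)/|1 - conj(a)φ(ζ)|² dm(ζ) → 0` as `|a| → 1⁻`. -/
theorem summable_norms_implies_vanishing_poisson_integral (φ : ℂ → ℂ)
    (hmeas : Measurable φ)
    (hmod : ∀ᵐ (θ : ℝ) ∂(volume.restrict (Set.Ioc (0:ℝ) (2 * Real.pi))),
      ‖φ (Complex.exp (θ * Complex.I))‖ ≤ 1)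
    (hsum : Summable (fun n : ℕ =>
      circleAvg (fun ζ => ‖φ ζ‖ ^ (2 * n)))) :
    Filter.Tendsto
      (fun a : ℂ => circleAvg (fun ζ =>
        (1 - ‖a‖ ^ 2) / ‖1 - (starRingEnd ℂ) a * φ ζ‖ ^ 2))
      toBoundary (nhds 0) := by
  set μ := volume.restrict (Set.Ioc (0:ℝ) (2 * Real.pi))
  have : IsFiniteMeasure μ := isFiniteMeasure_restrict.2 measure_Ioc_lt_top.ne
  have hφ : AEStronglyMeasurable (fun θ : ℝ => φ (Complex.exp (θ * Complex.I))) μ :=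
    (hmeas.comp (by fun_prop)).aestronglyMeasurable
  have hsum_integral : Summable fun n : ℕ => ∫ θ, ‖φ (Complex.exp (θ * Complex.I))‖ ^ (2 * n) ∂μ := by
    refine (hsum.mul_left (2 * Real.pi)).congr fun n => ?_
    rw [circleAvg_eq_setIntegral, ← mul_assoc, mul_inv_cancel₀ Real.two_pi_pos.ne', one_mul]
  have hfin := lintegral_inv_one_sub_enorm_sq_lt_top_of_summable hφ hmod hsum_integral
  have key := (tendsto_integral_diskKernel_toBoundary hφ hfin).const_mul (2 * Real.pi)⁻¹
  rw [mul_zero] at key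
  simp_rw [circleAvg_eq_setIntegral]
  exact key
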